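/- Let m ≥ 2 and let p_j = (x_j, y_j) ∈ ℝ², j = 1,…,m, be points whose x-coordinates are pairwise distinct. Then the function f : ℝ² → ℝ, f(a,b) = max_{j=1,…,m} |y_j − a x_j − b|, attains its global minimum at exactly one point (a₀, b₀) ∈ ℝ²; that is, there exists a unique linear function with minimal algebraic L∞-distance to the set {p_1,…,p_m}. -/

import Mathlib

open Filter Finset

theorem stmt16_aux (m : ℕ) (hm : 2 ≤ m) (x y : Fin m → ℝ)
    (hx : Function.Injective x) (ne : (Finset.univ : Finset (Fin m)).Nonempty) :
    ∃! ab : ℝ × ℝ, ∀ a b : ℝ,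
      (Finset.univ.sup' ne fun j => |y j - ab.1 * x j - ab.2|) ≤
        Finset.univ.sup' ne fun j => |y j - a * x j - b| := by
  classical
  set F : ℝ × ℝ → ℝ := fun p => Finset.univ.sup' ne fun j => |y j - p.1 * x j - p.2| with hFdef
  show ∃! ab : ℝ × ℝ, ∀ a b : ℝ, F ab ≤ F (a, b)
  have hFle : ∀ (p : ℝ × ℝ) (j : Fin m), |y j - p.1 * x j - p.2| ≤ F p := by
    intro p j
    exact Finset.le_sup' (fun j => |y j - p.1 * x j - p.2|) (Finset.mem_univ j)
  have hF0 : ∀ p : ℝ × ℝ, 0 ≤ F p := fun p => (abs_nonneg _).trans (hFle p ne.choose)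
  -- two indices with distinct x-values
  set i0 : Fin m := ⟨0, by omega⟩ with hi0
  set i1 : Fin m := ⟨1, by omega⟩ with hi1
  have hi01 : i0 ≠ i1 := by simp [hi0, hi1, Fin.ext_iff]
  have hx01 : x i0 ≠ x i1 := fun h => hi01 (hx h)
  set d : ℝ := |x i0 - x i1| with hd
  have hdpos : 0 < d := abs_pos.mpr (sub_ne_zero.mpr hx01)
  set D : ℝ := |y i0 - y i1| with hD
  set X : ℝ := |x i0| with hX
  set Y : ℝ := |y i0| with hY
  have hD0 : 0 ≤ D := abs_nonneg _
  have hX0 : 0 ≤ X := abs_nonneg _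
  have hY0 : 0 ≤ Y := abs_nonneg _
  set K : ℝ := 2 + 2 * X + d with hK
  set C : ℝ := D + X * D + d * Y with hC
  have hKpos : 0 < K := by positivity
  -- continuity
  have contF : Continuous F := by
    apply Continuous.finset_sup'_apply ne
    intro j _
    exact ((continuous_const.sub (continuous_fst.mul continuous_const)).sub continuous_snd).abs
  -- coercivity bound : d * ‖p‖ ≤ K * F p + C
  have hnorm : ∀ p : ℝ × ℝ, d * ‖p‖ ≤ K * F p + C := by
    rintro ⟨a, b⟩
    have h0 := hFle (a, b) i0
    have h1 := hFle (a, b) i1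
    have hf0 := hF0 (a, b)
    set f := F (a, b) with hf
    have hda : |a| * d ≤ 2 * f + D := by
      have e1 : |a| * d - D ≤ |(y i0 - a * x i0 - b) - (y i1 - a * x i1 - b)| := by
        have e2 : |a * (x i0 - x i1)| - |y i0 - y i1| ≤
            |a * (x i0 - x i1) - (y i0 - y i1)| := abs_sub_abs_le_abs_sub _ _
        have e3 : |a * (x i0 - x i1) - (y i0 - y i1)| =
            |(y i0 - a * x i0 - b) - (y i1 - a * x i1 - b)| := by
          rw [abs_sub_comm]; ring_nf
        rw [abs_mul] at e2
        rw [e3] at e2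
        simpa [hd, hD] using e2
      have e4 : |(y i0 - a * x i0 - b) - (y i1 - a * x i1 - b)| ≤ 2 * f := by
        have := abs_sub (y i0 - a * x i0 - b) (y i1 - a * x i1 - b)
        linarith
      linarith
    have hb : |b| ≤ f + Y + |a| * X := by
      have e5 : |b| ≤ |y i0 - a * x i0| + |y i0 - a * x i0 - b| := by
        have := abs_sub (y i0 - a * x i0) (y i0 - a * x i0 - b)
        simpa using this
      have e6 : |y i0 - a * x i0| ≤ Y + |a| * X := by
        have := abs_sub (y i0) (a * x i0)
        rw [abs_mul] at this
        simpa [hY, hX] using this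
      linarith
    have hnA : d * |a| ≤ K * f + C := by
      have h2 : 0 ≤ X * f := by positivity
      have h3 : 0 ≤ d * f := mul_nonneg hdpos.le hf0
      have h4 : 0 ≤ X * D := by positivity
      have h5 : 0 ≤ d * Y := mul_nonneg hdpos.le hY0
      simp only [hK, hC]; nlinarith
    have hnB : d * |b| ≤ K * f + C := by
      have h2 : d * |b| ≤ d * (f + Y + |a| * X) :=
        mul_le_mul_of_nonneg_left hb hdpos.le
      have h3 : X * (|a| * d) ≤ X * (2 * f + D) :=
        mul_le_mul_of_nonneg_left hda hX0
      have h4 : 0 ≤ X * f := by positivity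
      simp only [hK, hC]; nlinarith
    have hnn : ‖(a, b)‖ = max |a| |b| := by
      simp [Prod.norm_def, Real.norm_eq_abs]
    rw [hnn]
    rcases max_cases |a| |b| with ⟨h, -⟩ | ⟨h, -⟩ <;> rw [h]
    · exact hnA
    · exact hnB
  -- tendsto cocompact
  have tends : Tendsto F (cocompact (ℝ × ℝ)) atTop := by
    have h1 : Tendsto (fun t : ℝ => (d * t - C) / K) atTop atTop := by
      apply Tendsto.atTop_div_const hKpos
      apply tendsto_atTop_add_const_right
      exact Tendsto.const_mul_atTop hdpos tendsto_id
    have h2 : Tendsto (fun p : ℝ × ℝ => (d * ‖p‖ - C) / K) (cocompact (ℝ × ℝ)) atTop :=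
      h1.comp tendsto_norm_cocompact_atTop
    apply tendsto_atTop_mono _ h2
    intro p
    rw [div_le_iff₀ hKpos]
    have := hnorm p
    linarith [mul_le_mul_of_nonneg_right (le_refl (F p)) hKpos.le]
  obtain ⟨p, hp⟩ := contF.exists_forall_le tends
  refine ⟨p, fun a b => hp (a, b), ?_⟩
  -- uniqueness
  intro q hq
  have hqp : F q = F p := le_antisymm (by simpa using hq p.1 p.2) (by simpa using hp q)
  set μ : ℝ := F p with hμ
  have hμ0 : 0 ≤ μ := hF0 p
  set E : ℝ × ℝ → Fin m → ℝ := fun r j => y j - r.1 * x j - r.2 with hE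
  set r : ℝ × ℝ := ((q.1 + p.1) / 2, (q.2 + p.2) / 2) with hr
  have hEr : ∀ j, E r j = (E q j + E p j) / 2 := by
    intro j; simp only [hE, hr]; ring
  have hEq : ∀ j, |E q j| ≤ μ := fun j => (hFle q j).trans_eq hqp
  have hEp : ∀ j, |E p j| ≤ μ := fun j => hFle p j
  have hrle : F r ≤ μ := by
    apply Finset.sup'_le
    intro j _
    have h1 := hEq j
    have h2 := hEp j
    have h3 : |E r j| ≤ (|E q j| + |E p j|) / 2 := by
      rw [hEr j, abs_div, abs_two]
      gcongr
      exact abs_add_le _ _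
    calc |E r j| ≤ (|E q j| + |E p j|) / 2 := h3
      _ ≤ μ := by linarith
  have hrge : μ ≤ F r := hp r
  have hrμ : F r = μ := le_antisymm hrle hrge
  -- r attains max at two distinct indices
  obtain ⟨j0, -, hj0⟩ := Finset.exists_mem_eq_sup' ne (fun j => |E r j|)
  have hj0' : |E r j0| = μ := by rw [← hj0]; exact hrμ
  have hEr_le : ∀ j, |E r j| ≤ μ := fun j => (hFle r j).trans_eq hrμ
  clear_value F E μ r
  have two_attain : ∃ j1, j1 ≠ j0 ∧ |E r j1| = μ := by
    by_contra hcon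
    push_neg at hcon
    -- erase j0 is nonempty
    have hk : ∃ k : Fin m, k ≠ j0 := by
      by_cases h : j0 = i0
      · exact ⟨i1, by rw [h]; exact fun hh => hi01 hh.symm⟩
      · exact ⟨i0, fun hh => h hh.symm⟩
    obtain ⟨k, hk⟩ := hk
    have hne' : (Finset.univ.erase j0).Nonempty := ⟨k, Finset.mem_erase.mpr ⟨hk, Finset.mem_univ _⟩⟩
    set M : ℝ := (Finset.univ.erase j0).sup' hne' (fun j => |E r j|) with hM
    have hMlt : M < μ := by
      rw [hM, Finset.sup'_lt_iff]
      intro j hj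
      exact lt_of_le_of_ne (hEr_le j) (hcon j (Finset.mem_erase.mp hj).1)
    have hμpos : 0 < μ := by
      have h6 : |E r k| ≤ M :=
        Finset.le_sup' (fun j => |E r j|) (Finset.mem_erase.mpr ⟨hk, Finset.mem_univ _⟩)
      have := abs_nonneg (E r k)
      linarith
    set s : ℝ := E r j0 / μ with hs
    have hs1 : |s| = 1 := by
      rw [hs, abs_div, hj0', abs_of_pos hμpos, div_self hμpos.ne']
    have hsμ : s * μ = E r j0 := by
      rw [hs]; field_simp
    set ε : ℝ := min ((μ - M) / 2) (μ / 2) with hε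
    have hεpos : 0 < ε := lt_min (by linarith) (by linarith)
    have hε1 : ε ≤ (μ - M) / 2 := min_le_left _ _
    have hε2 : ε ≤ μ / 2 := min_le_right _ _
    set r' : ℝ × ℝ := (r.1, r.2 + s * ε) with hr'
    have hFr' : F r' ≤ μ - ε := by
      rw [hFdef]
      apply Finset.sup'_le
      intro j _
      have hErj : y j - r'.1 * x j - r'.2 = E r j - s * ε := by
        simp only [hE, hr']; ring
      rw [hErj]
      by_cases hjj : j = j0
      · subst hjj
        rw [← hsμ, ← mul_sub, abs_mul, hs1, one_mul, abs_of_nonneg (by linarith)]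
      · have h1 : |E r j| ≤ M :=
          Finset.le_sup' (fun j => |E r j|) (Finset.mem_erase.mpr ⟨hjj, Finset.mem_univ _⟩)
        have h2 : |E r j - s * ε| ≤ |E r j| + |s * ε| := abs_sub _ _
        rw [abs_mul, hs1, one_mul, abs_of_pos hεpos] at h2
        linarith
    have := hp r'
    linarith [hFr' ]
  obtain ⟨j1, hj1ne, hj1'⟩ := two_attain
  have same : ∀ j, |E r j| = μ → E p j = E q j := by
    intro j hj
    obtain ⟨h1a, h1b⟩ := abs_le.mp (hEp j)
    obtain ⟨h2a, h2b⟩ := abs_le.mp (hEq j)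
    rw [hEr j] at hj
    rcases (abs_eq hμ0).mp hj with h | h <;> linarith
  have eq0 : y j0 - p.1 * x j0 - p.2 = y j0 - q.1 * x j0 - q.2 := by
    simpa [hE] using same j0 hj0'
  have eq1 : y j1 - p.1 * x j1 - p.2 = y j1 - q.1 * x j1 - q.2 := by
    simpa [hE] using same j1 hj1'
  have hxj : x j0 - x j1 ≠ 0 := sub_ne_zero.mpr (fun h => hj1ne ((hx h).symm))
  have h11 : p.1 = q.1 := by
    have hsub : p.1 * (x j0 - x j1) = q.1 * (x j0 - x j1) := by
      linear_combination eq1 - eq0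
    exact mul_right_cancel₀ hxj hsub
  have h22 : p.2 = q.2 := by linear_combination (-1 : ℝ) * eq0 - (x j0) * h11
  exact Prod.ext h11.symm h22.symm

/-- The algebraic L∞-distance `f(a,b) = max_j |y_j - a x_j - b|`
attains its global minimum at exactly one point `(a₀,b₀) ∈ ℝ²`. -/
theorem stmt_16 (m : ℕ) (hm : 2 ≤ m) (x y : Fin m → ℝ)
    (hx : Function.Injective x) :
    ∃! ab : ℝ × ℝ, ∀ a b : ℝ,
      (Finset.univ.sup' ⟨⟨0, by omega⟩, Finset.mem_univ _⟩
          fun j => |y j - ab.1 * x j - ab.2|) ≤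
        Finset.univ.sup' ⟨⟨0, by omega⟩, Finset.mem_univ _⟩
          fun j => |y j - a * x j - b| := by
  exact stmt16_aux m hm x y hx _
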